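/- Suppose 1, ε₁, …, ε_m are linearly independent over ℚ and each ε_j ∈ (−1,1). If t > 0, w ∈ Σ, and φ_t(w) = w, then exactly one of the following holds: either w_k = 0 for all k ≥ 2, w₁ = i·w₀ or w₁ = −i·w₀, and |w₀|² = 1/2; or there is an index k with 2 ≤ k ≤ n such that |w_k| = 1 and w_l = 0 for every l ≠ k. (Hence the flow has exactly n+1 = 2m+2 periodic orbits.) -/

import Mathlib

open Complex

/-- The index `2(j+1)` in `Fin (2m+2)`, for `j : Fin m` (the index of `w_{2j}` in the paper's
numbering `j = 1, …, m`). -/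
def idxA (m : ℕ) (j : Fin m) : Fin (2 * m + 2) := ⟨2 * j.val + 2, by have := j.isLt; omega⟩

/-- The index `2(j+1)+1` in `Fin (2m+2)`, for `j : Fin m` (the index of `w_{2j+1}`). -/
def idxB (m : ℕ) (j : Fin m) : Fin (2 * m + 2) := ⟨2 * j.val + 3, by have := j.isLt; omega⟩

/-- The weights of the flow: `θ₀ = θ₁ = 1`, `θ_{2j} = 1 + ε_j`, `θ_{2j+1} = 1 − ε_j`. -/
def wtFlow (m : ℕ) (ε : Fin m → ℝ) : Fin (2 * m + 2) → ℝ := fun k =>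
  if h : k.val ≤ 1 then 1
  else if k.val % 2 = 0 then 1 + ε ⟨k.val / 2 - 1, by have := k.isLt; omega⟩
  else 1 - ε ⟨k.val / 2 - 1, by have := k.isLt; omega⟩

/-- The flow `φ_t` on `ℂ^{n+1}` (`n = 2m+1`):
`φ_t(w)_k = e^{2π i t θ_k}·w_k` with weights `θ` as above. -/
noncomputable def brFlow (m : ℕ) (ε : Fin m → ℝ) (t : ℝ) (w : Fin (2 * m + 2) → ℂ) :
    Fin (2 * m + 2) → ℂ :=
  fun k => Complex.exp (2 * (Real.pi : ℂ) * Complex.I * (t : ℂ) * ((wtFlow m ε k : ℝ) : ℂ)) * w k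

/-- The Brieskorn sphere `Σ ⊆ ℂ^{n+1}`, `n = 2m+1`:
`w₀² + w₁² − 2i·∑_j w_{2j} w_{2j+1} = 0` and `∑_k |w_k|² = 1`. -/
def brSphere (m : ℕ) : Set (Fin (2 * m + 2) → ℂ) :=
  { w | w ⟨0, by omega⟩ ^ 2 + w ⟨1, by omega⟩ ^ 2
          - 2 * Complex.I * ∑ j : Fin m, w (idxA m j) * w (idxB m j) = 0 ∧
        ∑ k, ‖w k‖ ^ 2 = 1 }

/-!
A coordinate `w_k` of a fixed point of `φ_t` can be nonzero only if `t θ_k ∈ ℤ`, where `θ_k` is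
the `k`-th weight of the flow. Two such conditions `t θ_k = p`, `t θ_l = q` give `q θ_k = p θ_l`.
Every weight has rational coordinates in the `ℚ`-independent family `(1, ε₁, …, ε_m)` with
coefficient `1` on `1`, so comparing coordinates yields `p = q` and then equal coordinates, which
for `k ≥ 2` forces `l = k`. Hence `w` is supported either on `{0, 1}`, where the quadric reads
`w₀² + w₁² = 0`, or on a single coordinate `k ≥ 2`.
-/

theorem Complex.exists_int_eq_of_exp_two_pi_I_mul_eq_one {x : ℝ}
    (h : exp (2 * Real.pi * I * x) = 1) : ∃ n : ℤ, x = n := by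
  obtain ⟨n, hn⟩ := exp_eq_one_iff.mp h
  refine ⟨n, ofReal_injective ?_⟩
  have h2 : 2 * (Real.pi : ℂ) * I ≠ 0 := by simp [Real.pi_ne_zero, I_ne_zero]
  simpa using mul_left_cancel₀ h2 (hn.trans (mul_comm _ _))

theorem LinearIndependent.smul_eq_smul_of_mul_sum_eq {ι : Type*} [Fintype ι] {v : ι → ℝ}
    (hv : LinearIndependent ℚ v) {a b : ι → ℚ} {t : ℝ} (ht : t ≠ 0) {p q : ℚ}
    (ha : t * ∑ i, a i * v i = p) (hb : t * ∑ i, b i * v i = q) : q • a = p • b := by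
  have hzero : ∑ i, (q • a - p • b) i • v i = 0 := by
    refine mul_left_cancel₀ ht ?_
    simp only [Pi.sub_apply, Pi.smul_apply, smul_eq_mul, Rat.smul_def, Rat.cast_sub,
      Rat.cast_mul, sub_mul, mul_assoc, Finset.sum_sub_distrib, ← Finset.mul_sum, mul_zero]
    linear_combination (q : ℝ) * ha - (p : ℝ) * hb
  funext i
  exact sub_eq_zero.mp (Fintype.linearIndependent_iff.mp hv _ hzero i)

/-- The coordinates of the weight `θ_k = wtFlow m ε k` in the family `(1, ε₁, …, ε_m)`. -/
def wtCoeff (m : ℕ) (k : Fin (2 * m + 2)) : Fin (m + 1) → ℚ :=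
  if k.val ≤ 1 then Pi.single 0 1
  else Pi.single 0 1 + (if k.val % 2 = 0 then 1 else -1) • Pi.single ⟨k.val / 2, by omega⟩ 1

theorem wtFlow_eq_sum (m : ℕ) (ε : Fin m → ℝ) (k : Fin (2 * m + 2)) :
    wtFlow m ε k = ∑ i, (wtCoeff m k i : ℝ) * (Fin.cons 1 ε : Fin (m + 1) → ℝ) i := by
  have hsucc (h : ¬k.val ≤ 1) : (⟨k.val / 2, by omega⟩ : Fin (m + 1)) =
      Fin.succ ⟨k.val / 2 - 1, by omega⟩ := by ext; simp; omega
  unfold wtFlow wtCoeff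
  split_ifs with h₁ h₂
  · simp [Pi.single_apply, apply_ite (Rat.cast : ℚ → ℝ)]
  all_goals
    rw [hsucc h₁]
    simp [Pi.single_apply, apply_ite (Rat.cast : ℚ → ℝ), ite_mul, add_mul, Finset.sum_add_distrib,
      sub_eq_add_neg, -Fin.succ_mk]

theorem wtCoeff_zero (m : ℕ) (k : Fin (2 * m + 2)) : wtCoeff m k 0 = 1 := by
  unfold wtCoeff
  split_ifs <;> simp [Pi.single_apply, Fin.ext_iff] <;> omega

theorem eq_of_wtCoeff_eq {m : ℕ} {k l : Fin (2 * m + 2)} (hk : 2 ≤ k.val)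
    (h : wtCoeff m l = wtCoeff m k) : l = k := by
  have := congrFun h ⟨k.val / 2, by omega⟩
  simp only [wtCoeff, if_neg (show ¬k.val ≤ 1 by omega)] at this
  ext
  split_ifs at this <;>
    norm_num [Pi.single_apply, Fin.ext_iff, ite_eq_iff, neg_eq_iff_eq_neg] at this <;> omega

theorem wtFlow_ne_zero {m : ℕ} {ε : Fin m → ℝ} (hε : ∀ j, ε j ∈ Set.Ioo (-1 : ℝ) 1)
    (k : Fin (2 * m + 2)) : wtFlow m ε k ≠ 0 := by
  unfold wtFlow
  split_ifs with h₁ h₂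
  · exact one_ne_zero
  all_goals
    obtain ⟨h₃, h₄⟩ := hε ⟨k.val / 2 - 1, by omega⟩
    intro h
    linarith

theorem exists_int_mul_wtFlow_eq_of_brFlow_eq {m : ℕ} {ε : Fin m → ℝ} {t : ℝ}
    {w : Fin (2 * m + 2) → ℂ} (hfix : brFlow m ε t w = w) {k : Fin (2 * m + 2)} (hk : w k ≠ 0) :
    ∃ n : ℤ, t * wtFlow m ε k = n := by
  refine exists_int_eq_of_exp_two_pi_I_mul_eq_one (mul_right_cancel₀ hk ?_)
  simpa [brFlow, mul_assoc] using congrFun hfix k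

theorem eq_of_mul_wtFlow_eq_int {m : ℕ} {ε : Fin m → ℝ}
    (hind : LinearIndependent ℚ (Fin.cons (1 : ℝ) ε)) (hε : ∀ j, ε j ∈ Set.Ioo (-1 : ℝ) 1)
    {t : ℝ} (ht : t ≠ 0) {k l : Fin (2 * m + 2)} (hk : 2 ≤ k.val) {p q : ℤ}
    (hp : t * wtFlow m ε k = p) (hq : t * wtFlow m ε l = q) : l = k := by
  have hp0 : (p : ℚ) ≠ 0 := by exact_mod_cast hp ▸ mul_ne_zero ht (wtFlow_ne_zero hε k)
  rw [wtFlow_eq_sum] at hp hq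
  have hprop := hind.smul_eq_smul_of_mul_sum_eq ht (p := p) (q := q) (by exact_mod_cast hp)
    (by exact_mod_cast hq)
  have hpq : (q : ℚ) = p := by simpa [wtCoeff_zero] using congrFun hprop 0
  rw [hpq] at hprop
  exact eq_of_wtCoeff_eq hk (smul_right_injective _ hp0 hprop).symm

theorem eq_pm_I_mul_and_norm_sq_eq_half_of_mem_brSphere {m : ℕ} {w : Fin (2 * m + 2) → ℂ}
    (hw : w ∈ brSphere m) (h : ∀ k : Fin (2 * m + 2), 2 ≤ k.val → w k = 0) :
    (w ⟨1, by omega⟩ = I * w ⟨0, by omega⟩ ∨ w ⟨1, by omega⟩ = -I * w ⟨0, by omega⟩) ∧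
      ‖w ⟨0, by omega⟩‖ ^ 2 = 1 / 2 := by
  obtain ⟨hquad, hnorm⟩ := hw
  have hsq : w ⟨1, by omega⟩ ^ 2 = (I * w ⟨0, by omega⟩) ^ 2 := by
    have : ∑ j : Fin m, w (idxA m j) * w (idxB m j) = 0 :=
      Finset.sum_eq_zero fun j _ => by simp [h (idxA m j) (by simp [idxA])]
    linear_combination hquad + 2 * I * this - w ⟨0, by omega⟩ ^ 2 * I_sq
  have hpm := sq_eq_sq_iff_eq_or_eq_neg.mp hsq
  rw [← neg_mul] at hpm
  refine ⟨hpm, ?_⟩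
  have h01 : ‖w ⟨1, by omega⟩‖ = ‖w ⟨0, by omega⟩‖ := by
    rcases hpm with h₁ | h₁ <;> rw [h₁] <;> simp
  rw [Fin.sum_univ_succ, Fin.sum_univ_succ, Finset.sum_eq_zero fun k _ => by
    simp [h k.succ.succ (by simp)]] at hnorm
  change ‖w ⟨0, by omega⟩‖ ^ 2 + (‖w ⟨1, by omega⟩‖ ^ 2 + 0) = 1 at hnorm
  rw [h01] at hnorm
  linarith

theorem norm_eq_one_of_sum_norm_sq_eq_one {ι E : Type*} [Fintype ι] [SeminormedAddCommGroup E]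
    {w : ι → E} (hw : ∑ i, ‖w i‖ ^ 2 = 1) {k : ι} (h : ∀ l, l ≠ k → w l = 0) : ‖w k‖ = 1 := by
  rw [Finset.sum_eq_single k (fun l _ hl => by simp [h l hl]) (by simp)] at hw
  exact (pow_eq_one_iff_of_nonneg (norm_nonneg _) two_ne_zero).mp hw

theorem eq_zero_of_brFlow_eq {m : ℕ} {ε : Fin m → ℝ}
    (hind : LinearIndependent ℚ (Fin.cons (1 : ℝ) ε)) (hε : ∀ j, ε j ∈ Set.Ioo (-1 : ℝ) 1)
    {t : ℝ} (ht : t ≠ 0) {w : Fin (2 * m + 2) → ℂ} (hfix : brFlow m ε t w = w)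
    {k : Fin (2 * m + 2)} (hk : 2 ≤ k.val) (hwk : w k ≠ 0) (l : Fin (2 * m + 2)) (hl : l ≠ k) :
    w l = 0 := by
  by_contra hwl
  obtain ⟨p, hp⟩ := exists_int_mul_wtFlow_eq_of_brFlow_eq hfix hwk
  obtain ⟨q, hq⟩ := exists_int_mul_wtFlow_eq_of_brFlow_eq hfix hwl
  exact hl (eq_of_mul_wtFlow_eq_int hind hε ht hk hp hq)

/-- Suppose `1, ε₁, …, ε_m` are linearly independent over `ℚ` and each `ε_j ∈ (−1,1)`.
If `t > 0`, `w ∈ Σ` and `φ_t(w) = w`, then exactly one of the following holds: either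
`w_k = 0` for all `k ≥ 2`, `w₁ = ± i·w₀` and `|w₀|² = 1/2`; or there is an index `k` with
`2 ≤ k` such that `|w_k| = 1` and `w_l = 0` for every `l ≠ k`. -/
theorem brieskorn_flow_periodic_points (m : ℕ) (ε : Fin m → ℝ)
    (hind : LinearIndependent ℚ (Fin.cons (1 : ℝ) ε))
    (hε : ∀ j, ε j ∈ Set.Ioo (-1 : ℝ) 1)
    (t : ℝ) (ht : 0 < t) (w : Fin (2 * m + 2) → ℂ)
    (hw : w ∈ brSphere m) (hfix : brFlow m ε t w = w) :
    Xor'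
      ((∀ k : Fin (2 * m + 2), 2 ≤ k.val → w k = 0) ∧
        (w ⟨1, by omega⟩ = Complex.I * w ⟨0, by omega⟩ ∨
          w ⟨1, by omega⟩ = -Complex.I * w ⟨0, by omega⟩) ∧
        ‖w ⟨0, by omega⟩‖ ^ 2 = 1 / 2)
      (∃ k : Fin (2 * m + 2), 2 ≤ k.val ∧ ‖w k‖ = 1 ∧
        ∀ l : Fin (2 * m + 2), l ≠ k → w l = 0) := by
  by_cases hall : ∀ k : Fin (2 * m + 2), 2 ≤ k.val → w k = 0
  · refine Or.inl ⟨⟨hall, eq_pm_I_mul_and_norm_sq_eq_half_of_mem_brSphere hw hall⟩, ?_⟩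
    rintro ⟨k, hk, hwk, -⟩
    simp [hall k hk] at hwk
  · push Not at hall
    obtain ⟨k, hk, hwk⟩ := hall
    have hsupp := eq_zero_of_brFlow_eq hind hε ht.ne' hfix hk hwk
    exact Or.inr ⟨⟨k, hk, norm_eq_one_of_sum_norm_sq_eq_one hw.2 hsupp, hsupp⟩,
      fun h => hwk (h.1 k hk)⟩
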